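/- Whitney's condition B implies Whitney's condition A: if a pair of strata (X_α, X_β) in a manifold X satisfies condition B at a point y ∈ X_α, then it satisfies condition A at y. -/

import Mathlib

open Filter Set
open scoped Topology

noncomputable section

variable {N : ℕ}

/-- Tangent vectors to a subset `S` of `ℝ^N` at `x`: velocities of smooth curves through
`x` staying in `S` near time `0`. -/
def tangentSetAt (S : Set (EuclideanSpace ℝ (Fin N))) (x : EuclideanSpace ℝ (Fin N)) :
    Set (EuclideanSpace ℝ (Fin N)) :=
  {v | ∃ γ : ℝ → EuclideanSpace ℝ (Fin N), ContDiff ℝ (⊤ : ℕ∞) γ ∧ γ 0 = x ∧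
    (∀ᶠ t in 𝓝 (0 : ℝ), γ t ∈ S) ∧ deriv γ 0 = v}

/-- The tangent space of `S` at `x`, as a submodule of `ℝ^N`. -/
def tangentSpaceAt (S : Set (EuclideanSpace ℝ (Fin N))) (x : EuclideanSpace ℝ (Fin N)) :
    Submodule ℝ (EuclideanSpace ℝ (Fin N)) :=
  Submodule.span ℝ (tangentSetAt S x)

/-- `S ⊆ ℝ^N` is an embedded `d`-dimensional submanifold: around each of its points there
is a smooth local chart of `ℝ^N` flattening `S` onto the coordinate subspace where the
last `N - d` coordinates vanish. -/
def IsSubmanifold (d : ℕ) (S : Set (EuclideanSpace ℝ (Fin N))) : Prop :=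
  ∀ x ∈ S, ∃ φ : PartialHomeomorph (EuclideanSpace ℝ (Fin N)) (EuclideanSpace ℝ (Fin N)),
    x ∈ φ.source ∧ ContDiffOn ℝ (⊤ : ℕ∞) φ φ.source ∧ ContDiffOn ℝ (⊤ : ℕ∞) φ.symm φ.target ∧
    φ.source ∩ S = φ.source ∩ φ ⁻¹' {y | ∀ i : Fin N, d ≤ (i : ℕ) → y i = 0}

/-- Convergence of a sequence of subspaces of `ℝ^N` to a subspace `τ` (convergence in the
Grassmannian): every vector of `τ` is a limit of vectors of the `T k`, and every limit
of a convergent sequence of vectors of the `T k` lies in `τ`. -/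
def SubspacesTendsto (T : ℕ → Submodule ℝ (EuclideanSpace ℝ (Fin N)))
    (τ : Submodule ℝ (EuclideanSpace ℝ (Fin N))) : Prop :=
  (∀ v ∈ τ, ∃ u : ℕ → EuclideanSpace ℝ (Fin N),
    (∀ k, u k ∈ T k) ∧ Tendsto u atTop (𝓝 v)) ∧
  (∀ (u : ℕ → EuclideanSpace ℝ (Fin N)) (v : EuclideanSpace ℝ (Fin N)),
    (∀ k, u k ∈ T k) → Tendsto u atTop (𝓝 v) → v ∈ τ)

/-- Whitney's condition A for the pair of strata `(Xa, Xb)` at `y ∈ Xa`: whenever a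
sequence of points of `Xb` converges to `y` with tangent spaces converging to a limiting
space `τ`, the tangent space of `Xa` at `y` is contained in `τ`. -/
def ConditionA (Xa Xb : Set (EuclideanSpace ℝ (Fin N))) (y : EuclideanSpace ℝ (Fin N)) :
    Prop :=
  ∀ (x : ℕ → EuclideanSpace ℝ (Fin N)) (τ : Submodule ℝ (EuclideanSpace ℝ (Fin N))),
    (∀ k, x k ∈ Xb) → Tendsto x atTop (𝓝 y) →
    SubspacesTendsto (fun k => tangentSpaceAt Xb (x k)) τ →
    tangentSpaceAt Xa y ≤ τ

/-- Whitney's condition B for the pair of strata `(Xa, Xb)` at `y ∈ Xa` (stated in a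
chart, so in `ℝ^N`): whenever sequences `x k ∈ Xb` and `y' k ∈ Xa` both converge to `y`,
the tangent spaces at `x k` converge to `τ`, and the secant lines from `y' k` to `x k`
converge to a limiting line (with unit direction `u`), that line lies in `τ`. -/
def ConditionB (Xa Xb : Set (EuclideanSpace ℝ (Fin N))) (y : EuclideanSpace ℝ (Fin N)) :
    Prop :=
  ∀ (x y' : ℕ → EuclideanSpace ℝ (Fin N)) (τ : Submodule ℝ (EuclideanSpace ℝ (Fin N)))
    (u : EuclideanSpace ℝ (Fin N)),
    (∀ k, x k ∈ Xb) → (∀ k, y' k ∈ Xa) →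
    Tendsto x atTop (𝓝 y) → Tendsto y' atTop (𝓝 y) →
    SubspacesTendsto (fun k => tangentSpaceAt Xb (x k)) τ →
    (∀ k, x k ≠ y' k) →
    Tendsto (fun k => (‖x k - y' k‖)⁻¹ • (x k - y' k)) atTop (𝓝 u) →
    Submodule.span ℝ {u} ≤ τ

/-- **Whitney's condition B implies condition A.**  If the pair of disjoint strata
`(Xa, Xb)` (smooth submanifolds of `ℝ^N` with `Xa` contained in the closure of `Xb`)
satisfies condition B at a point `y ∈ Xa`, then it satisfies condition A at `y`. -/
theorem conditionB_implies_conditionA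
    {da db : ℕ} (Xa Xb : Set (EuclideanSpace ℝ (Fin N)))
    (hXa : IsSubmanifold da Xa) (hXb : IsSubmanifold db Xb)
    (hdisj : Disjoint Xa Xb) (hcl : Xa ⊆ closure Xb)
    (y : EuclideanSpace ℝ (Fin N)) (hy : y ∈ Xa)
    (hB : ConditionB Xa Xb y) :
    ConditionA Xa Xb y := by
  intro x τ hxB hx hT
  rw [tangentSpaceAt, Submodule.span_le]
  rintro v ⟨γ, hγ, hγ0, hγmem, hγd⟩
  rcases eq_or_ne v 0 with rfl | hv
  · exact τ.zero_mem
  have hdiff : HasDerivAt γ v 0 := by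
    have h1 := ((hγ.differentiable (by simp)) 0).hasDerivAt
    rwa [hγd] at h1
  obtain ⟨ε, hε, hεmem⟩ := Metric.eventually_nhds_iff.mp hγmem
  have hxy : ∀ k, x k ≠ y := fun k h => (hdisj.ne_of_mem hy (hxB k)) h.symm
  set r : ℕ → ℝ := fun k => ‖x k - y‖ with hrdef
  have hrpos : ∀ k, 0 < r k := fun k => by
    simp only [hrdef, norm_pos_iff]
    exact sub_ne_zero.mpr (hxy k)
  have hr0 : Tendsto r atTop (𝓝 0) := by
    have := tendsto_iff_norm_sub_tendsto_zero.mp hx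
    simpa [hrdef] using this
  set t : ℕ → ℝ := fun k => min (ε/2) (Real.sqrt (r k)) with htdef
  have htpos : ∀ k, 0 < t k := fun k =>
    lt_min (by linarith) (Real.sqrt_pos.mpr (hrpos k))
  have hts : Tendsto (fun k => Real.sqrt (r k)) atTop (𝓝 0) := by
    have := (Real.continuous_sqrt.tendsto 0).comp hr0
    simpa [Function.comp_def] using this
  have ht0 : Tendsto t atTop (𝓝 0) := by
    have h1 : Tendsto t atTop (𝓝 (min (ε/2) 0)) := tendsto_const_nhds.min hts
    rwa [min_eq_right (by linarith : (0:ℝ) ≤ ε/2)] at h1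
  have htev : ∀ᶠ k in atTop, t k = Real.sqrt (r k) := by
    filter_upwards [hts.eventually (gt_mem_nhds (by linarith : (0:ℝ) < ε/2))] with k hk
    exact min_eq_right hk.le
  have hrt : Tendsto (fun k => r k / t k) atTop (𝓝 0) := by
    apply Tendsto.congr' _ hts
    filter_upwards [htev] with k hk
    rw [hk, Real.div_sqrt]
  -- the points on Xa
  have hmemA : ∀ k, γ (t k) ∈ Xa := by
    intro k
    apply hεmem
    rw [Real.dist_eq, sub_zero, abs_of_pos (htpos k)]
    calc t k ≤ ε/2 := min_le_left _ _
    _ < ε := by linarith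
  have hy' : Tendsto (fun k => γ (t k)) atTop (𝓝 y) := by
    have := ((hγ.continuous.tendsto 0).comp ht0)
    simpa [hγ0, Function.comp_def] using this
  have hne : ∀ k, x k ≠ γ (t k) := fun k h =>
    (hdisj.ne_of_mem (hmemA k) (hxB k)) h.symm
  set s : ℕ → EuclideanSpace ℝ (Fin N) := fun k => (t k)⁻¹ • (x k - γ (t k)) with hsdef
  -- s → -v
  have hslope : Tendsto (fun k => (t k)⁻¹ • (γ (t k) - y)) atTop (𝓝 v) := by
    have h1 : Tendsto (slope γ 0) (𝓝[≠] (0:ℝ)) (𝓝 v) :=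
      hasDerivAt_iff_tendsto_slope.mp hdiff
    have h2 : Tendsto t atTop (𝓝[≠] (0:ℝ)) :=
      tendsto_nhdsWithin_of_tendsto_nhds_of_eventually_within t ht0
        (Eventually.of_forall fun k => (htpos k).ne')
    have h3 := h1.comp h2
    have : ∀ k, slope γ 0 (t k) = (t k)⁻¹ • (γ (t k) - y) := by
      intro k
      rw [slope_def_module, hγ0, sub_zero]
    exact h3.congr fun k => this k
  have hfirst : Tendsto (fun k => (t k)⁻¹ • (x k - y)) atTop (𝓝 0) := by
    rw [tendsto_zero_iff_norm_tendsto_zero]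
    apply Tendsto.congr' _ hrt
    filter_upwards with k
    rw [norm_smul, norm_inv, Real.norm_eq_abs, abs_of_pos (htpos k), hrdef,
      div_eq_inv_mul]
  have hs : Tendsto s atTop (𝓝 (-v)) := by
    have heq : ∀ k, s k = (t k)⁻¹ • (x k - y) - (t k)⁻¹ • (γ (t k) - y) := by
      intro k
      rw [hsdef]
      simp only [← smul_sub]
      congr 1
      abel
    have := hfirst.sub hslope
    rw [zero_sub] at this
    exact this.congr (fun k => (heq k).symm)
  set u : EuclideanSpace ℝ (Fin N) := -(‖v‖⁻¹ • v) with hudef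
  have hsecant : Tendsto (fun k => (‖x k - γ (t k)‖)⁻¹ • (x k - γ (t k))) atTop (𝓝 u) := by
    have hvne : ‖(-v : EuclideanSpace ℝ (Fin N))‖ ≠ 0 :=
      norm_ne_zero_iff.mpr (neg_ne_zero.mpr hv)
    have hcont : Tendsto (fun z : EuclideanSpace ℝ (Fin N) => ‖z‖⁻¹ • z) (𝓝 (-v))
        (𝓝 (‖(-v : EuclideanSpace ℝ (Fin N))‖⁻¹ • (-v))) :=
      ((continuous_norm.tendsto _).inv₀ hvne).smul tendsto_id
    have h4 := hcont.comp hs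
    have hlim : ‖(-v : EuclideanSpace ℝ (Fin N))‖⁻¹ • (-v) = u := by
      rw [hudef, norm_neg, smul_neg]
    rw [hlim] at h4
    apply h4.congr
    intro k
    have hwne : x k - γ (t k) ≠ 0 := sub_ne_zero.mpr (hne k)
    have hns : ‖s k‖ = (t k)⁻¹ * ‖x k - γ (t k)‖ := by
      rw [hsdef]
      simp only
      rw [norm_smul, norm_inv, Real.norm_eq_abs, abs_of_pos (htpos k)]
    show ‖s k‖⁻¹ • s k = _
    rw [hns, hsdef]
    simp only
    rw [smul_smul]
    congr 1
    rw [mul_inv, inv_inv, mul_comm (t k) _, mul_assoc, mul_inv_cancel₀ (htpos k).ne', mul_one]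
  have hspan := hB x (fun k => γ (t k)) τ u hxB hmemA hx hy' hT hne hsecant
  have humem : u ∈ τ := hspan (Submodule.mem_span_singleton_self u)
  have hveq : v = (-‖v‖) • u := by
    rw [hudef, smul_neg, neg_smul, neg_neg, smul_smul,
      mul_inv_cancel₀ (norm_ne_zero_iff.mpr hv), one_smul]
  rw [hveq]
  exact τ.smul_mem _ humem
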